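/- For mutually independent uniform M, K₁, K₂ on Z/nZ, the encrypted messages M ⊕ K₁ and M ⊕ K₂ are independent of each other. -/

import Mathlib

open MeasureTheory ProbabilityTheory

instance (n : ℕ) : MeasurableSpace (ZMod n) := ⊤
instance (n : ℕ) : MeasurableSingletonClass (ZMod n) := ⟨fun _ => trivial⟩

/-! Convolving with a translation-invariant measure `μ` returns `μ`, so adding an independent
summand does not change the law of a translation-invariant random variable. Applied to
`(M, M) + (K₁, K₂)`, whose second summand is uniform on `ZMod n × ZMod n`, this shows that the
pair `(M + K₁, M + K₂)` has the law of `(K₁, K₂)`, i.e. the product of two uniform laws; by the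
same argument each `M + Kᵢ` is uniform. -/

namespace MeasureTheory.Measure

theorem conv_eq_smul_of_isAddLeftInvariant {G : Type*} [AddGroup G] [MeasurableSpace G]
    [MeasurableAdd₂ G] (ν μ : Measure G) [SFinite ν] [SFinite μ] [μ.IsAddLeftInvariant] :
    ν ∗ μ = ν Set.univ • μ := by
  have hshear := measurePreserving_prod_add ν μ
  rw [← map_snd_prod, ← hshear.map_eq, map_map measurable_snd hshear.measurable]
  rfl

instance isAddLeftInvariant_uniformOfFintype {G : Type*} [AddGroup G] [Fintype G] [Nonempty G]
    [MeasurableSpace G] [MeasurableSingletonClass G] :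
    (PMF.uniformOfFintype G).toMeasure.IsAddLeftInvariant := by
  refine ⟨fun g => ext_of_singleton fun x => ?_⟩
  rw [map_apply (measurable_const_add g) (measurableSet_singleton x),
    Set.preimage_add_left_singleton, PMF.toMeasure_apply_singleton _ _ (measurableSet_singleton _),
    PMF.toMeasure_apply_singleton _ _ (measurableSet_singleton _), PMF.uniformOfFintype_apply,
    PMF.uniformOfFintype_apply]

end MeasureTheory.Measure

namespace ProbabilityTheory

theorem IndepFun.map_add_eq_of_isAddLeftInvariant {Ω G : Type*} [MeasurableSpace Ω]
    {μ : Measure Ω} [IsProbabilityMeasure μ] [AddGroup G] [MeasurableSpace G] [MeasurableAdd₂ G]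
    {X Y : Ω → G} [(μ.map Y).IsAddLeftInvariant] (hX : AEMeasurable X μ) (hY : AEMeasurable Y μ)
    (hXY : X ⟂ᵢ[μ] Y) :
    μ.map (X + Y) = μ.map Y := by
  have := Measure.isProbabilityMeasure_map (μ := μ) hX
  rw [hXY.map_add_eq_map_conv_map₀ hX hY, Measure.conv_eq_smul_of_isAddLeftInvariant,
    measure_univ, one_smul]

end ProbabilityTheory

theorem encrypted_messages_indep_general
    {Ω : Type*} [MeasurableSpace Ω] {μ : Measure Ω} [IsProbabilityMeasure μ]
    {n : ℕ} [NeZero n] (M K₁ K₂ : Ω → ZMod n)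
    (hM : Measurable M) (hK₁ : Measurable K₁) (hK₂ : Measurable K₂)
    (hIndep : iIndepFun ![M, K₁, K₂] μ)
    (hK₁unif : Measure.map K₁ μ = (PMF.uniformOfFintype (ZMod n)).toMeasure)
    (hK₂unif : Measure.map K₂ μ = (PMF.uniformOfFintype (ZMod n)).toMeasure) :
    IndepFun (fun ω => M ω + K₁ ω) (fun ω => M ω + K₂ ω) μ := by
  have hmeas : ∀ i, Measurable (![M, K₁, K₂] i) := by
    intro i; fin_cases i <;> assumption
  have : (μ.map K₁).IsAddLeftInvariant := hK₁unif ▸ inferInstance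
  have : (μ.map K₂).IsAddLeftInvariant := hK₂unif ▸ inferInstance
  have hM₁ : μ.map (M + K₁) = μ.map K₁ :=
    (hIndep.indepFun (i := 0) (j := 1) (by decide)).map_add_eq_of_isAddLeftInvariant
      hM.aemeasurable hK₁.aemeasurable
  have hM₂ : μ.map (M + K₂) = μ.map K₂ :=
    (hIndep.indepFun (i := 0) (j := 2) (by decide)).map_add_eq_of_isAddLeftInvariant
      hM.aemeasurable hK₂.aemeasurable
  have hK : μ.map (fun ω => (K₁ ω, K₂ ω)) = (μ.map K₁).prod (μ.map K₂) :=
    (indepFun_iff_map_prod_eq_prod_map_map hK₁.aemeasurable hK₂.aemeasurable).1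
      (hIndep.indepFun (i := 1) (j := 2) (by decide))
  have : (μ.map fun ω => (K₁ ω, K₂ ω)).IsAddLeftInvariant := hK ▸ inferInstance
  have hMK : (fun ω => (M ω, M ω)) ⟂ᵢ[μ] fun ω => (K₁ ω, K₂ ω) :=
    (hIndep.indepFun_prodMk hmeas 1 2 0 (by decide) (by decide)).symm.comp
      (measurable_id.prodMk measurable_id) measurable_id
  change (M + K₁) ⟂ᵢ[μ] (M + K₂)
  rw [indepFun_iff_map_prod_eq_prod_map_map (hM.add hK₁).aemeasurable (hM.add hK₂).aemeasurable,
    hM₁, hM₂, ← hK]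
  exact hMK.map_add_eq_of_isAddLeftInvariant (hM.prodMk hM).aemeasurable
    (hK₁.prodMk hK₂).aemeasurable

/-- For mutually independent uniform `M`, `K₁`, `K₂` on `ZMod n`, the encrypted messages
`M ⊕ K₁` and `M ⊕ K₂` are independent of each other. -/
theorem encrypted_messages_indep
    {Ω : Type*} [MeasurableSpace Ω] {μ : Measure Ω} [IsProbabilityMeasure μ]
    {n : ℕ} [NeZero n] (M K₁ K₂ : Ω → ZMod n)
    (hM : Measurable M) (hK₁ : Measurable K₁) (hK₂ : Measurable K₂)
    (hIndep : iIndepFun ![M, K₁, K₂] μ)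
    (hMunif : Measure.map M μ = (PMF.uniformOfFintype (ZMod n)).toMeasure)
    (hK₁unif : Measure.map K₁ μ = (PMF.uniformOfFintype (ZMod n)).toMeasure)
    (hK₂unif : Measure.map K₂ μ = (PMF.uniformOfFintype (ZMod n)).toMeasure) :
    IndepFun (fun ω => M ω + K₁ ω) (fun ω => M ω + K₂ ω) μ :=
  encrypted_messages_indep_general M K₁ K₂ hM hK₁ hK₂ hIndep hK₁unif hK₂unif
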